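/- For l = 1,2 and k ≥ 4, the map 𝒫_l is the orthogonal projection from V_l onto 𝒱_l^⊥ (the orthogonal complement of 𝒱_l in V_l with respect to the Hermitian inner product): 𝒫_l maps V_l into V_l, 𝒫_l∘𝒫_l = 𝒫_l, ker 𝒫_l = 𝒱_l, the range of 𝒫_l is contained in 𝒱_l^⊥ (⟨𝒫_l f, h⟩ = 0 for all h ∈ 𝒱_l), and hence f − 𝒫_l f ∈ 𝒱_l for every f ∈ V_l. -/
import Mathlib


open scoped BigOperators ComplexConjugate ENNReal
open MeasureTheory

set_option maxHeartbeats 1000000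

noncomputable section

/-- The index set `{1,2,3,4}` of spinor indices. -/
abbrev Idx := Fin 4

/-- Tensors with `q` (antisymmetric) superscripts and `p` (symmetric) subscripts,
each index ranging over `{1,2,3,4}`. -/
abbrev Tens (q p : ℕ) := (Fin q → Idx) → (Fin p → Idx) → ℂ

/-- Symmetry in the subscripts. -/
def SymSub {q p : ℕ} (f : Tens q p) : Prop :=
  ∀ (A : Fin q → Idx) (σ : Equiv.Perm (Fin p)) (B : Fin p → Idx), f A (B ∘ σ) = f A B

/-- Antisymmetry in the superscripts. -/
def AntiSup {q p : ℕ} (f : Tens q p) : Prop :=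
  ∀ (σ : Equiv.Perm (Fin q)) (A : Fin q → Idx) (B : Fin p → Idx),
    f (A ∘ σ) B = ((Equiv.Perm.sign σ : ℤ) : ℂ) * f A B

/-- Membership in `V_l = ⊙^p ℂ⁴ ⊗ ∧^q ℂ⁴`: symmetric in subscripts, antisymmetric in
superscripts. -/
def IsMixed {q p : ℕ} (f : Tens q p) : Prop := AntiSup f ∧ SymSub f

/-- Symmetrization `ξ_{(B₁…B_t)}` of a `t`-index tensor. -/
def symmetrize {t : ℕ} (ξ : (Fin t → Idx) → ℂ) : (Fin t → Idx) → ℂ :=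
  fun B => ((t.factorial : ℂ))⁻¹ * ∑ σ : Equiv.Perm (Fin t), ξ (B ∘ σ)

/-- Antisymmetrization `ξ_{[B₁…B_t]}` of a `t`-index tensor. -/
def antisymmetrize {t : ℕ} (ξ : (Fin t → Idx) → ℂ) : (Fin t → Idx) → ℂ :=
  fun B => ((t.factorial : ℂ))⁻¹ * ∑ σ : Equiv.Perm (Fin t),
    ((Equiv.Perm.sign σ : ℤ) : ℂ) * ξ (B ∘ σ)

/-- The contraction `𝒞(f)^{A₁…A_{q}}_{B₁…B_{p}} = Σ_C f^{C A₁…A_q}_{B₁…B_p C}`. -/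
def contr {q p : ℕ} (f : Tens (q+1) (p+1)) : Tens q p :=
  fun A B => ∑ C : Idx, f (Fin.cons C A) (Fin.snoc B C)

/-- The Hermitian inner product on tensors, induced from `⊗^k ℂ⁴`. -/
def tinner {q p : ℕ} (f h : Tens q p) : ℂ :=
  ∑ A : Fin q → Idx, ∑ B : Fin p → Idx, f A B * conj (h A B)

/-- The squared norm of a tensor. -/
def tnormSq {q p : ℕ} (f : Tens q p) : ℝ :=
  ∑ A : Fin q → Idx, ∑ B : Fin p → Idx, Complex.normSq (f A B)
/-- The Kronecker delta `δ^A_B`. -/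
def kdelta (A B : Idx) : ℂ := if A = B then 1 else 0

/-- The map `𝒫₁ : V₁ → V₁`,
`𝒫₁(f)^A_{B₁…B_{k−1}} = ((k−1)/(k+2)) · δ^A_{(B₁} 𝒞(f)_{B₂…B_{k−1})}`. -/
def P1 (k : ℕ) {p : ℕ} (f : Tens 1 (p+1)) : Tens 1 (p+1) :=
  fun A B => (((k : ℂ) - 1) / ((k : ℂ) + 2)) *
    symmetrize (fun B' => kdelta (A 0) (B' 0) * contr f ![] (Fin.tail B')) B

/-- The map `𝒫₂ : V₂ → V₂`,
`𝒫₂(f)^{A₁A₂}_{B₁…B_{k−2}} = (2(k−2)/k) · δ^{[A₁}_{(B₁} 𝒞(f)^{A₂]}_{B₂…B_{k−2})}`. -/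
def P2 (k : ℕ) {p : ℕ} (f : Tens 2 (p+1)) : Tens 2 (p+1) :=
  fun A B => (2 * ((k : ℂ) - 2) / (k : ℂ)) *
    antisymmetrize (fun A' =>
      symmetrize (fun B' => kdelta (A' 0) (B' 0) * contr f ![A' 1] (Fin.tail B')) B) A

/-! ### Auxiliary lemmas -/

section Aux

open Equiv

lemma extPerm_aux {p : ℕ} (σ τ : Equiv.Perm (Fin p)) (hστ : ∀ j, σ (τ j) = j) (i : Fin (p+1)) :
    Fin.lastCases (Fin.last p) (fun j => (σ j).castSucc)
      (Fin.lastCases (motive := fun _ => Fin (p+1)) (Fin.last p) (fun j => (τ j).castSucc) i) = i := by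
  cases i using Fin.lastCases with
  | last => simp
  | cast j => simp [hστ]

/-- Extend a permutation of `Fin p` to `Fin (p+1)`, fixing the last element. -/
def extPerm {p : ℕ} (σ : Equiv.Perm (Fin p)) : Equiv.Perm (Fin (p+1)) where
  toFun := fun i => Fin.lastCases (Fin.last p) (fun j => (σ j).castSucc) i
  invFun := fun i => Fin.lastCases (Fin.last p) (fun j => (σ⁻¹ j).castSucc) i
  left_inv := fun i => extPerm_aux σ⁻¹ σ (fun j => σ.symm_apply_apply j) i
  right_inv := fun i => extPerm_aux σ σ⁻¹ (fun j => σ.apply_symm_apply j) i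

lemma snoc_comp_extPerm {p : ℕ} (B : Fin p → Idx) (C : Idx) (σ : Equiv.Perm (Fin p)) :
    (Fin.snoc B C : Fin (p+1) → Idx) ∘ (extPerm σ) = Fin.snoc (B ∘ σ) C := by
  funext i
  cases i using Fin.lastCases with
  | last => simp [extPerm]
  | cast j => simp [extPerm]

lemma contr_symSub {q p : ℕ} {f : Tens (q+1) (p+1)} (hf : SymSub f) : SymSub (contr f) := by
  intro A σ B
  unfold contr
  refine Finset.sum_congr rfl fun C _ => ?_
  rw [← hf (Fin.cons C A) (extPerm σ) (Fin.snoc B C), snoc_comp_extPerm]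

lemma symmetrize_perm {t : ℕ} (ξ : (Fin t → Idx) → ℂ) (τ : Equiv.Perm (Fin t)) (B : Fin t → Idx) :
    symmetrize ξ (B ∘ τ) = symmetrize ξ B := by
  unfold symmetrize
  congr 1
  refine Fintype.sum_equiv (Equiv.mulLeft τ) _ _ fun σ => ?_
  rfl

lemma sign_mul_sign {t : ℕ} (σ : Equiv.Perm (Fin t)) :
    ((Equiv.Perm.sign σ : ℤ) : ℂ) * ((Equiv.Perm.sign σ : ℤ) : ℂ) = 1 := by
  rw [← Int.cast_mul, ← Units.val_mul, Int.units_mul_self]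
  norm_num

lemma antisymmetrize_perm {t : ℕ} (ξ : (Fin t → Idx) → ℂ) (τ : Equiv.Perm (Fin t)) (A : Fin t → Idx) :
    antisymmetrize ξ (A ∘ τ) = ((Equiv.Perm.sign τ : ℤ) : ℂ) * antisymmetrize ξ A := by
  unfold antisymmetrize
  rw [mul_left_comm]
  congr 1
  rw [Finset.mul_sum]
  refine Fintype.sum_equiv (Equiv.mulLeft τ) _ _ fun σ => ?_
  have h1 : (A ∘ τ) ∘ σ = A ∘ (Equiv.mulLeft τ σ) := rfl
  rw [h1, ← mul_assoc]
  congr 1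
  have h2 : Equiv.mulLeft τ σ = τ * σ := rfl
  rw [h2, map_mul, Units.val_mul, Int.cast_mul, ← mul_assoc, sign_mul_sign, one_mul]

lemma cons_comp_finRotate {n : ℕ} (a : Idx) (B : Fin n → Idx) :
    (Fin.cons a B : Fin (n+1) → Idx) ∘ (finRotate (n+1)) = Fin.snoc B a := by
  funext i
  cases i using Fin.lastCases with
  | last => simp [finRotate_succ_apply, Fin.last_add_one]
  | cast j => simp [finRotate_succ_apply, Fin.coeSucc_eq_succ]

lemma swap_last_succ {n : ℕ} (D : Fin (n+2) → Idx) :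
    (fun t' : Fin (n+1) => D (Equiv.swap 0 (Fin.last (n+1)) (Fin.succ t')))
      = (fun j : Fin (n+1) => D j.castSucc) ∘ (finRotate (n+1)) := by
  funext t'
  cases t' using Fin.lastCases with
  | last =>
      simp [Fin.succ_last, Equiv.swap_apply_right, finRotate_succ_apply, Fin.last_add_one]
  | cast j =>
      have h1 : (j.castSucc.succ : Fin (n+2)) = j.succ.castSucc := Fin.succ_castSucc j
      have h2 : (j.succ.castSucc : Fin (n+2)) ≠ 0 := by
        simp [Fin.ext_iff]
      have h3 : (j.succ.castSucc : Fin (n+2)) ≠ Fin.last (n+1) := Fin.ne_of_lt (Fin.castSucc_lt_last _)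
      simp only [Function.comp_apply, h1, Equiv.swap_apply_of_ne_of_ne h2 h3,
        finRotate_succ_apply, Fin.coeSucc_eq_succ]

lemma swap_castSucc_succ {n : ℕ} (B : Fin (n+1) → Idx) (C : Idx) (s : Fin (n+1)) :
    (fun t' : Fin (n+1) => (Fin.snoc B C : Fin (n+2) → Idx)
        (Equiv.swap 0 s.castSucc (Fin.succ t')))
      = Fin.snoc (fun j : Fin n => B (Equiv.swap 0 s (j.castSucc + 1))) C := by
  funext t'
  cases t' using Fin.lastCases with
  | last =>
      have h2 : (Fin.last (n+1) : Fin (n+2)) ≠ 0 := by simp [Fin.ext_iff]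
      have h3 : (Fin.last (n+1) : Fin (n+2)) ≠ s.castSucc := (Fin.ne_of_lt (Fin.castSucc_lt_last _)).symm
      rw [Fin.succ_last, Equiv.swap_apply_of_ne_of_ne h2 h3]
      simp
  | cast j =>
      have h1 : (j.castSucc.succ : Fin (n+2)) = j.succ.castSucc := Fin.succ_castSucc j
      have hc : (0 : Fin (n+2)) = (0 : Fin (n+1)).castSucc := rfl
      rw [Fin.snoc_castSucc, h1, hc,
        Function.Injective.swap_apply (Fin.castSucc_injective _) 0 s j.succ,
        Fin.snoc_castSucc, Fin.coeSucc_eq_succ]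

lemma snoc_E_eq {n : ℕ} (B : Fin (n+1) → Idx) (s : Fin (n+1)) :
    Fin.snoc (fun j : Fin n => B (Equiv.swap 0 s (j.castSucc + 1))) (B s)
      = B ∘ ((finRotate (n+1)).trans (Equiv.swap 0 s)) := by
  funext t'
  cases t' using Fin.lastCases with
  | last =>
      simp [finRotate_succ_apply, Fin.last_add_one, Equiv.swap_apply_left]
  | cast j =>
      simp [finRotate_succ_apply]

lemma sum_kdelta_mul (x : Idx) (F : Idx → ℂ) : ∑ b : Idx, kdelta x b * F b = F x := by
  simp [kdelta, ite_mul, Finset.sum_ite_eq]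

lemma sum_kdelta_mul' (x : Idx) (F : Idx → ℂ) : ∑ b : Idx, kdelta b x * F b = F x := by
  simp [kdelta, ite_mul, Finset.sum_ite_eq']

lemma core {n : ℕ} (x : Idx → Idx) (G : Idx → (Fin (n+1) → Idx) → ℂ)
    (hG : ∀ (C : Idx) (σ : Equiv.Perm (Fin (n+1))) (B : Fin (n+1) → Idx), G C (B ∘ σ) = G C B)
    (B : Fin (n+1) → Idx) :
    ∑ C : Idx, symmetrize (fun B' => kdelta (x C) (B' 0) * G C (Fin.tail B')) (Fin.snoc B C)
    = ((n:ℂ)+2)⁻¹ * ((∑ C : Idx, kdelta (x C) C * G C B)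
        + ∑ s : Fin (n+1), ∑ C : Idx, kdelta (x C) (B s) *
            G C (Fin.snoc (fun j : Fin n => B (Equiv.swap 0 s (j.castSucc + 1))) C)) := by
  have hCsum : ∀ C : Idx,
      symmetrize (fun B' => kdelta (x C) (B' 0) * G C (Fin.tail B')) (Fin.snoc B C)
      = ((n:ℂ)+2)⁻¹ * (kdelta (x C) C * G C B
          + ∑ s : Fin (n+1), kdelta (x C) (B s) *
              G C (Fin.snoc (fun j : Fin n => B (Equiv.swap 0 s (j.castSucc + 1))) C)) := by
    intro C
    unfold symmetrize
    set D : Fin (n+2) → Idx := Fin.snoc B C with hD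
    have step1 : ∑ σ : Equiv.Perm (Fin (n+2)), (fun B' => kdelta (x C) (B' 0) * G C (Fin.tail B')) (D ∘ σ)
        = ∑ p : Fin (n+2) × Equiv.Perm (Fin (n+1)),
            kdelta (x C) (D p.1) * G C (fun t' => D (Equiv.swap 0 p.1 t'.succ)) := by
      refine (Fintype.sum_equiv Equiv.Perm.decomposeFin.symm _ _ fun p => ?_).symm
      obtain ⟨i, e⟩ := p
      have h0 : (D ∘ (Equiv.Perm.decomposeFin.symm (i, e))) 0 = D i := by
        simp [Equiv.Perm.decomposeFin_symm_apply_zero]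
      have ht : Fin.tail (D ∘ (Equiv.Perm.decomposeFin.symm (i, e)))
          = (fun t' => D (Equiv.swap 0 i t'.succ)) ∘ e := by
        funext j
        simp [Fin.tail, Equiv.Perm.decomposeFin_symm_apply_succ]
      simp only [h0, ht, hG]
    rw [step1, Fintype.sum_prod_type]
    have step2 : ∀ i : Fin (n+2),
        (∑ _e : Equiv.Perm (Fin (n+1)),
          kdelta (x C) (D i) * G C (fun t' => D (Equiv.swap 0 i t'.succ)))
        = ((n+1).factorial : ℂ) * (kdelta (x C) (D i) * G C (fun t' => D (Equiv.swap 0 i t'.succ))) := by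
      intro i
      rw [Finset.sum_const, Finset.card_univ, Fintype.card_perm, Fintype.card_fin,
        nsmul_eq_mul]
    rw [Finset.sum_congr rfl (fun i _ => step2 i), ← Finset.mul_sum, Fin.sum_univ_castSucc]
    have hlast : kdelta (x C) (D (Fin.last (n+1))) * G C (fun t' => D (Equiv.swap 0 (Fin.last (n+1)) t'.succ))
        = kdelta (x C) C * G C B := by
      have h1 : D (Fin.last (n+1)) = C := Fin.snoc_last _ _
      have hDc : (fun j : Fin (n+1) => D j.castSucc) = B := by
        funext j; exact Fin.snoc_castSucc _ _ _
      have h2 : (fun t' : Fin (n+1) => D (Equiv.swap 0 (Fin.last (n+1)) t'.succ))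
          = B ∘ (finRotate (n+1)) := by
        rw [swap_last_succ D, hDc]
      rw [h1, h2, hG]
    have hcast : ∀ s : Fin (n+1),
        kdelta (x C) (D s.castSucc) * G C (fun t' => D (Equiv.swap 0 s.castSucc t'.succ))
        = kdelta (x C) (B s) * G C (Fin.snoc (fun j : Fin n => B (Equiv.swap 0 s (j.castSucc + 1))) C) := by
      intro s
      rw [hD, swap_castSucc_succ B C s, Fin.snoc_castSucc]
    rw [hlast, Finset.sum_congr rfl (fun s _ => hcast s)]
    have hfac : ((n+1+1).factorial : ℂ)⁻¹ * ((n+1).factorial : ℂ) = ((n:ℂ)+2)⁻¹ := by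
      have h2 : (((n+1).factorial : ℂ)) ≠ 0 :=
        Nat.cast_ne_zero.mpr (Nat.factorial_ne_zero (n+1))
      rw [Nat.factorial_succ (n+1)]
      push_cast
      rw [mul_inv, mul_assoc, inv_mul_cancel₀ h2, mul_one]
      norm_num
      ring
    rw [← mul_assoc, hfac, add_comm (∑ s : Fin (n+1), _)]
  rw [Finset.sum_congr rfl (fun C _ => hCsum C), ← Finset.mul_sum, Finset.sum_add_distrib,
    Finset.sum_comm]

lemma keyA {n : ℕ} (G : (Fin (n+1) → Idx) → ℂ)
    (hG : ∀ (σ : Equiv.Perm (Fin (n+1))) (B : Fin (n+1) → Idx), G (B ∘ σ) = G B)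
    (B : Fin (n+1) → Idx) :
    ∑ C : Idx, symmetrize (fun B' : Fin (n+2) → Idx => kdelta C (B' 0) * G (Fin.tail B')) (Fin.snoc B C)
    = (((n:ℂ)+5)/((n:ℂ)+2)) * G B := by
  rw [core (fun C => C) (fun _ => G) (fun _ σ B => hG σ B) B]
  have h1 : (∑ C : Idx, kdelta C C * G B) = 4 * G B := by
    simp [kdelta]
  have h2 : ∀ s : Fin (n+1), (∑ C : Idx, kdelta C (B s) *
      G (Fin.snoc (fun j : Fin n => B (Equiv.swap 0 s (j.castSucc + 1))) C)) = G B := by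
    intro s
    rw [sum_kdelta_mul' (B s) (fun C => G (Fin.snoc (fun j : Fin n => B (Equiv.swap 0 s (j.castSucc + 1))) C)),
      snoc_E_eq B s, hG]
  rw [h1, Finset.sum_congr rfl (fun s _ => h2 s), Finset.sum_const, Finset.card_univ,
    Fintype.card_fin, nsmul_eq_mul]
  rw [div_eq_mul_inv]
  push_cast
  ring

lemma keyB {n : ℕ} (G2 : Idx → (Fin (n+1) → Idx) → ℂ)
    (hG : ∀ (C : Idx) (σ : Equiv.Perm (Fin (n+1))) (B : Fin (n+1) → Idx), G2 C (B ∘ σ) = G2 C B)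
    (htr : ∀ E : Fin n → Idx, ∑ C : Idx, G2 C (Fin.snoc E C) = 0)
    (X : Idx) (B : Fin (n+1) → Idx) :
    ∑ C : Idx, symmetrize (fun B' : Fin (n+2) → Idx => kdelta X (B' 0) * G2 C (Fin.tail B')) (Fin.snoc B C)
    = ((n:ℂ)+2)⁻¹ * G2 X B := by
  rw [core (fun _ => X) G2 hG B]
  have h1 : (∑ C : Idx, kdelta X C * G2 C B) = G2 X B :=
    sum_kdelta_mul X (fun C => G2 C B)
  have h2 : ∀ s : Fin (n+1), (∑ C : Idx, kdelta X (B s) *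
      G2 C (Fin.snoc (fun j : Fin n => B (Equiv.swap 0 s (j.castSucc + 1))) C)) = 0 := by
    intro s
    rw [← Finset.mul_sum, htr, mul_zero]
  rw [h1, Finset.sum_congr rfl (fun s _ => h2 s), Finset.sum_const]
  simp

end Aux

section Aux2

lemma perm2 (F : Equiv.Perm (Fin 2) → ℂ) :
    ∑ σ : Equiv.Perm (Fin 2), F σ = F 1 + F (Equiv.swap 0 1) := by
  rw [show (Finset.univ : Finset (Equiv.Perm (Fin 2))) = {1, Equiv.swap 0 1} from by decide,
    Finset.sum_insert (by decide), Finset.sum_singleton]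

lemma antisym2 (ξ : (Fin 2 → Idx) → ℂ) (A : Fin 2 → Idx) :
    antisymmetrize ξ A = (2:ℂ)⁻¹ * (ξ A - ξ (A ∘ (Equiv.swap 0 1))) := by
  unfold antisymmetrize
  rw [perm2 (fun σ => ((Equiv.Perm.sign σ : ℤ) : ℂ) * ξ (A ∘ σ))]
  have hs : Equiv.Perm.sign (Equiv.swap (0 : Fin 2) 1) = -1 :=
    Equiv.Perm.sign_swap (by decide)
  have hfac : ((2:ℕ).factorial : ℂ) = 2 := by norm_num [Nat.factorial]
  simp only [map_one, Units.val_one, Int.cast_one, one_mul, Equiv.Perm.coe_one,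
    Function.comp_id, hs, hfac, Units.val_neg, Units.val_one, Int.cast_neg, Int.cast_one]
  ring

/-- The contraction of a mixed `(2, p+2)` tensor is trace-free. -/
lemma contr_traceless {p : ℕ} (f : Tens 2 (p+2)) (hf : IsMixed f) (E : Fin p → Idx) :
    ∑ C : Idx, contr f ![C] (Fin.snoc E C) = 0 := by
  have key : ∀ C D : Idx,
      f (Fin.cons D ![C]) (Fin.snoc (Fin.snoc E C) D)
        = - f (Fin.cons C ![D]) (Fin.snoc (Fin.snoc E D) C) := by
    intro C D
    have h1 : (Fin.cons D ![C] : Fin 2 → Idx) = (Fin.cons C ![D]) ∘ (Equiv.swap 0 1) := by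
      funext x
      fin_cases x <;> simp [Equiv.swap_apply_def] <;> rfl
    have h2 : (Fin.snoc (Fin.snoc E C) D : Fin (p+2) → Idx)
        = (Fin.snoc (Fin.snoc E D) C) ∘ (Equiv.swap ((Fin.last p).castSucc) (Fin.last (p+1))) := by
      funext x
      cases x using Fin.lastCases with
      | last =>
          simp [Equiv.swap_apply_right]
      | cast y =>
          cases y using Fin.lastCases with
          | last => simp [Equiv.swap_apply_left]
          | cast z =>
              have hz1 : (z.castSucc.castSucc : Fin (p+2)) ≠ (Fin.last p).castSucc :=
                fun h => absurd (Fin.castSucc_injective _ h) (Fin.ne_of_lt (Fin.castSucc_lt_last z))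
              have hz2 : (z.castSucc.castSucc : Fin (p+2)) ≠ Fin.last (p+1) :=
                Fin.ne_of_lt (Fin.castSucc_lt_last _)
              simp [Equiv.swap_apply_of_ne_of_ne hz1 hz2]
    rw [h1, h2, hf.2 _ _ _, hf.1 (Equiv.swap 0 1) _ _,
      Equiv.Perm.sign_swap (by decide : (0 : Fin 2) ≠ 1)]
    simp
  have hS : ∑ C : Idx, contr f ![C] (Fin.snoc E C)
      = ∑ C : Idx, ∑ D : Idx, f (Fin.cons D ![C]) (Fin.snoc (Fin.snoc E C) D) := rfl
  set S := ∑ C : Idx, ∑ D : Idx, f (Fin.cons D ![C]) (Fin.snoc (Fin.snoc E C) D) with hSdef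
  have hneg : S = -S := by
    calc S = ∑ C : Idx, ∑ D : Idx, - f (Fin.cons C ![D]) (Fin.snoc (Fin.snoc E D) C) := by
            refine Finset.sum_congr rfl fun C _ => Finset.sum_congr rfl fun D _ => key C D
      _ = - ∑ C : Idx, ∑ D : Idx, f (Fin.cons C ![D]) (Fin.snoc (Fin.snoc E D) C) := by
            simp [Finset.sum_neg_distrib]
      _ = -S := by
            rw [hSdef]
            congr 1
            exact Finset.sum_comm
  have hz : S = 0 := by linear_combination hneg / 2
  rw [hS, hz]

end Aux2

section Aux3

lemma cast_ne_zero' (m c : ℕ) (hc : 0 < c) : ((m:ℂ) + (c:ℂ)) ≠ 0 := by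
  have h : ((m + c : ℕ) : ℂ) ≠ 0 := Nat.cast_ne_zero.mpr (by omega)
  push_cast at h
  exact h

lemma contr_P1 {m : ℕ} (f : Tens 1 (m+3)) (hf : IsMixed f)
    (A : Fin 0 → Idx) (B : Fin (m+2) → Idx) :
    contr (P1 (m+4) f) A B = contr f A B := by
  have hA : A = ![] := funext fun i => i.elim0
  subst hA
  have hG : ∀ (σ : Equiv.Perm (Fin (m+2))) (B : Fin (m+2) → Idx),
      contr f ![] (B ∘ σ) = contr f ![] B := fun σ B => contr_symSub hf.2 ![] σ B
  show ∑ C : Idx, P1 (m+4) f (Fin.cons C ![]) (Fin.snoc B C) = contr f ![] B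
  simp only [P1, Fin.cons_zero]
  rw [← Finset.mul_sum, keyA (contr f ![]) hG B]
  have h3 : ((m:ℂ) + 3) ≠ 0 := cast_ne_zero' m 3 (by omega)
  have h6 : ((m:ℂ) + 6) ≠ 0 := cast_ne_zero' m 6 (by omega)
  rw [← mul_assoc]
  have hone : (((m+4:ℕ) : ℂ) - 1) / (((m+4:ℕ):ℂ) + 2) * ((((m+1:ℕ):ℂ)+5)/(((m+1:ℕ):ℂ)+2)) = 1 := by
    push_cast
    rw [show ((m:ℂ)+4-1) = (m:ℂ)+3 from by ring, show ((m:ℂ)+4+2) = (m:ℂ)+6 from by ring,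
      show ((m:ℂ)+1+5) = (m:ℂ)+6 from by ring, show ((m:ℂ)+1+2) = (m:ℂ)+3 from by ring,
      div_mul_div_comm, div_eq_one_iff_eq (mul_ne_zero h6 h3)]
    ring
  rw [hone, one_mul]

lemma contr_P2 {m : ℕ} (f : Tens 2 (m+2)) (hf : IsMixed f)
    (A : Fin 1 → Idx) (B : Fin (m+1) → Idx) :
    contr (P2 (m+4) f) A B = contr f A B := by
  have hA : A = ![A 0] := by funext x; rw [Fin.eq_zero x]; rfl
  have hG : ∀ (Y : Idx) (σ : Equiv.Perm (Fin (m+1))) (B : Fin (m+1) → Idx),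
      contr f ![Y] (B ∘ σ) = contr f ![Y] B := fun Y σ B => contr_symSub hf.2 ![Y] σ B
  have htr : ∀ E : Fin m → Idx, ∑ C : Idx, contr f ![C] (Fin.snoc E C) = 0 :=
    contr_traceless f hf
  show ∑ C : Idx, P2 (m+4) f (Fin.cons C A) (Fin.snoc B C) = contr f A B
  have hterm : ∀ C : Idx, P2 (m+4) f (Fin.cons C A) (Fin.snoc B C)
      = (2 * (((m+4 : ℕ) : ℂ) - 2) / ((m+4 : ℕ) : ℂ)) * ((2:ℂ)⁻¹ *
          (symmetrize (fun B' : Fin (m+2) → Idx =>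
              kdelta C (B' 0) * contr f ![A 0] (Fin.tail B')) (Fin.snoc B C)
           - symmetrize (fun B' : Fin (m+2) → Idx =>
              kdelta (A 0) (B' 0) * contr f ![C] (Fin.tail B')) (Fin.snoc B C))) := by
    intro C
    simp only [P2]
    rw [antisym2]
    rfl
  rw [Finset.sum_congr rfl (fun C _ => hterm C), ← Finset.mul_sum, ← Finset.mul_sum,
    Finset.sum_sub_distrib]
  rw [keyA (contr f ![A 0]) (hG (A 0)) B,
    keyB (fun C => contr f ![C]) hG htr (A 0) B]
  rw [← hA]
  have h2 : ((m:ℂ) + 2) ≠ 0 := cast_ne_zero' m 2 (by omega)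
  have h4 : ((m:ℂ) + 4) ≠ 0 := cast_ne_zero' m 4 (by omega)
  push_cast
  field_simp
  ring

end Aux3

section Aux4

lemma sum_funsplit {t : ℕ} (F : (Fin (t+1) → Idx) → ℂ) :
    ∑ B : Fin (t+1) → Idx, F B = ∑ b : Idx, ∑ B' : Fin t → Idx, F (Fin.cons b B') := by
  have h1 : ∑ p : Idx × (Fin t → Idx), F (Fin.cons p.1 p.2) = ∑ B, F B :=
    Fintype.sum_equiv (Fin.consEquiv (fun _ => Idx)) _ _ (fun p => rfl)
  rw [← h1, Fintype.sum_prod_type]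

lemma sum_fun1 (Φ : (Fin 1 → Idx) → ℂ) : ∑ A : Fin 1 → Idx, Φ A = ∑ a : Idx, Φ (fun _ => a) :=
  (Fintype.sum_equiv (Equiv.funUnique (Fin 1) Idx).symm _ _ (fun a => rfl)).symm

lemma adj_sym {q t : ℕ} (ξ : (Fin q → Idx) → (Fin t → Idx) → ℂ) (h : Tens q t) (hh : SymSub h) :
    ∑ A : Fin q → Idx, ∑ B : Fin t → Idx, symmetrize (ξ A) B * conj (h A B)
    = ∑ A : Fin q → Idx, ∑ B : Fin t → Idx, ξ A B * conj (h A B) := by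
  refine Finset.sum_congr rfl fun A _ => ?_
  have hσ : ∀ σ : Equiv.Perm (Fin t),
      ∑ B : Fin t → Idx, ξ A (B ∘ σ) * conj (h A B)
      = ∑ B : Fin t → Idx, ξ A B * conj (h A B) := by
    intro σ
    refine Fintype.sum_equiv (Equiv.arrowCongr σ.symm (Equiv.refl Idx)) _ _ fun B => ?_
    have he : (Equiv.arrowCongr σ.symm (Equiv.refl Idx)) B = B ∘ σ := by
      funext j; simp
    rw [he, hh A σ B]
  have expand : ∀ B : Fin t → Idx, symmetrize (ξ A) B * conj (h A B)
      = ((t.factorial : ℂ))⁻¹ * ∑ σ : Equiv.Perm (Fin t), ξ A (B ∘ σ) * conj (h A B) := by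
    intro B
    unfold symmetrize
    rw [mul_assoc, Finset.sum_mul]
  rw [Finset.sum_congr rfl (fun B _ => expand B), ← Finset.mul_sum, Finset.sum_comm]
  rw [Finset.sum_congr rfl (fun σ _ => hσ σ), Finset.sum_const, Finset.card_univ,
    Fintype.card_perm, Fintype.card_fin, nsmul_eq_mul, ← mul_assoc,
    inv_mul_cancel₀ (Nat.cast_ne_zero.mpr (Nat.factorial_ne_zero t) : ((t.factorial : ℂ)) ≠ 0),
    one_mul]

lemma adj_anti {q t : ℕ} (Φ : (Fin q → Idx) → (Fin t → Idx) → ℂ) (h : Tens q t) (hh : AntiSup h) :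
    ∑ A : Fin q → Idx, ∑ B : Fin t → Idx, antisymmetrize (fun A' => Φ A' B) A * conj (h A B)
    = ∑ A : Fin q → Idx, ∑ B : Fin t → Idx, Φ A B * conj (h A B) := by
  rw [Finset.sum_comm]
  conv_rhs => rw [Finset.sum_comm]
  refine Finset.sum_congr rfl fun B _ => ?_
  have hσ : ∀ σ : Equiv.Perm (Fin q),
      ∑ A : Fin q → Idx, ((Equiv.Perm.sign σ : ℤ) : ℂ) * (Φ (A ∘ σ) B * conj (h A B))
      = ∑ A : Fin q → Idx, Φ A B * conj (h A B) := by
    intro σ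
    refine Fintype.sum_equiv (Equiv.arrowCongr σ.symm (Equiv.refl Idx)) _ _ fun A => ?_
    have he : (Equiv.arrowCongr σ.symm (Equiv.refl Idx)) A = A ∘ σ := by
      funext j; simp
    rw [he, hh σ A B]
    rw [map_mul, ← Complex.ofReal_intCast, Complex.conj_ofReal, Complex.ofReal_intCast]
    ring
  have expand : ∀ A : Fin q → Idx, antisymmetrize (fun A' => Φ A' B) A * conj (h A B)
      = ((q.factorial : ℂ))⁻¹ * ∑ σ : Equiv.Perm (Fin q),
          ((Equiv.Perm.sign σ : ℤ) : ℂ) * (Φ (A ∘ σ) B * conj (h A B)) := by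
    intro A
    unfold antisymmetrize
    rw [mul_assoc, Finset.sum_mul]
    congr 1
    refine Finset.sum_congr rfl fun σ _ => ?_
    ring
  rw [Finset.sum_congr rfl (fun A _ => expand A), ← Finset.mul_sum, Finset.sum_comm]
  rw [Finset.sum_congr rfl (fun σ _ => hσ σ), Finset.sum_const, Finset.card_univ,
    Fintype.card_perm, Fintype.card_fin, nsmul_eq_mul, ← mul_assoc,
    inv_mul_cancel₀ (Nat.cast_ne_zero.mpr (Nat.factorial_ne_zero q) : ((q.factorial : ℂ)) ≠ 0),
    one_mul]

end Aux4

section Aux5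

lemma orth1 {t : ℕ} (G : (Fin t → Idx) → ℂ) (h : Tens 1 (t+1)) (hh : SymSub h)
    (hc : ∀ (A : Fin 0 → Idx) (B : Fin t → Idx), contr h A B = 0) :
    ∑ A : Fin 1 → Idx, ∑ B : Fin (t+1) → Idx,
      kdelta (A 0) (B 0) * G (Fin.tail B) * conj (h A B) = 0 := by
  rw [sum_fun1 (fun A => ∑ B : Fin (t+1) → Idx, kdelta (A 0) (B 0) * G (Fin.tail B) * conj (h A B))]
  have step : ∀ a : Idx, ∑ B : Fin (t+1) → Idx,
      kdelta a (B 0) * G (Fin.tail B) * conj (h (fun _ => a) B)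
      = ∑ B' : Fin t → Idx, G B' * conj (h (fun _ => a) (Fin.cons a B')) := by
    intro a
    rw [sum_funsplit (fun B => kdelta a (B 0) * G (Fin.tail B) * conj (h (fun _ => a) B))]
    have e1 : ∀ (b : Idx) (B' : Fin t → Idx),
        kdelta a ((Fin.cons b B' : Fin (t+1) → Idx) 0) * G (Fin.tail (Fin.cons b B' : Fin (t+1) → Idx))
          * conj (h (fun _ => a) (Fin.cons b B'))
        = kdelta a b * (G B' * conj (h (fun _ => a) (Fin.cons b B'))) := by
      intro b B'
      rw [Fin.cons_zero, Fin.tail_cons, mul_assoc]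
    rw [Finset.sum_congr rfl (fun b _ => Finset.sum_congr rfl (fun B' _ => e1 b B'))]
    rw [Finset.sum_congr rfl (fun b _ => (Finset.mul_sum _ _ _).symm)]
    exact sum_kdelta_mul a _
  rw [Finset.sum_congr rfl (fun a _ => step a), Finset.sum_comm]
  refine Finset.sum_eq_zero fun B' _ => ?_
  rw [← Finset.mul_sum]
  have e2 : ∀ a : Idx, h (fun _ => a) (Fin.cons a B') = h (Fin.cons a ![]) (Fin.snoc B' a) := by
    intro a
    have h1 : (fun _ : Fin 1 => a) = Fin.cons a ![] := by
      funext x; rw [Fin.eq_zero x]; rfl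
    rw [h1, ← cons_comp_finRotate a B']
    exact (hh _ _ _).symm
  have hz : (∑ a : Idx, conj (h (fun _ => a) (Fin.cons a B'))) = 0 := by
    rw [Finset.sum_congr rfl (fun a _ => congrArg conj (e2 a)), ← map_sum]
    rw [show (∑ a : Idx, h (Fin.cons a ![]) (Fin.snoc B' a)) = contr h ![] B' from rfl, hc ![] B']
    exact map_zero _
  rw [hz, mul_zero]

lemma orth2 {t : ℕ} (G : Idx → (Fin t → Idx) → ℂ) (h : Tens 2 (t+1)) (hh : SymSub h)
    (hc : ∀ (A : Fin 1 → Idx) (B : Fin t → Idx), contr h A B = 0) :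
    ∑ A : Fin 2 → Idx, ∑ B : Fin (t+1) → Idx,
      kdelta (A 0) (B 0) * G (A 1) (Fin.tail B) * conj (h A B) = 0 := by
  rw [sum_funsplit (fun A : Fin 2 → Idx => ∑ B : Fin (t+1) → Idx,
    kdelta (A 0) (B 0) * G (A 1) (Fin.tail B) * conj (h A B))]
  have step : ∀ (a0 : Idx) (A' : Fin 1 → Idx), ∑ B : Fin (t+1) → Idx,
      kdelta ((Fin.cons a0 A' : Fin 2 → Idx) 0) (B 0) * G ((Fin.cons a0 A' : Fin 2 → Idx) 1) (Fin.tail B)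
        * conj (h (Fin.cons a0 A') B)
      = ∑ B' : Fin t → Idx, G (A' 0) B' * conj (h (Fin.cons a0 A') (Fin.cons a0 B')) := by
    intro a0 A'
    rw [sum_funsplit (fun B => kdelta ((Fin.cons a0 A' : Fin 2 → Idx) 0) (B 0)
      * G ((Fin.cons a0 A' : Fin 2 → Idx) 1) (Fin.tail B) * conj (h (Fin.cons a0 A') B))]
    have e1 : ∀ (b : Idx) (B' : Fin t → Idx),
        kdelta ((Fin.cons a0 A' : Fin 2 → Idx) 0) ((Fin.cons b B' : Fin (t+1) → Idx) 0)
          * G ((Fin.cons a0 A' : Fin 2 → Idx) 1) (Fin.tail (Fin.cons b B' : Fin (t+1) → Idx))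
          * conj (h (Fin.cons a0 A') (Fin.cons b B'))
        = kdelta a0 b * (G (A' 0) B' * conj (h (Fin.cons a0 A') (Fin.cons b B'))) := by
      intro b B'
      rw [Fin.cons_zero, Fin.cons_zero, Fin.tail_cons, mul_assoc]
      rfl
    rw [Finset.sum_congr rfl (fun b _ => Finset.sum_congr rfl (fun B' _ => e1 b B'))]
    rw [Finset.sum_congr rfl (fun b _ => (Finset.mul_sum _ _ _).symm)]
    exact sum_kdelta_mul a0 _
  rw [Finset.sum_congr rfl (fun a0 _ => Finset.sum_congr rfl (fun A' _ => step a0 A')),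
    Finset.sum_comm]
  refine Finset.sum_eq_zero fun A' _ => ?_
  rw [Finset.sum_comm]
  refine Finset.sum_eq_zero fun B' _ => ?_
  rw [← Finset.mul_sum]
  have e2 : ∀ a : Idx, h (Fin.cons a A') (Fin.cons a B') = h (Fin.cons a A') (Fin.snoc B' a) := by
    intro a
    rw [← cons_comp_finRotate a B']
    exact (hh _ _ _).symm
  have hz : (∑ a : Idx, conj (h (Fin.cons a A') (Fin.cons a B'))) = 0 := by
    rw [Finset.sum_congr rfl (fun a _ => congrArg conj (e2 a)), ← map_sum]
    rw [show (∑ a : Idx, h (Fin.cons a A') (Fin.snoc B' a)) = contr h A' B' from rfl, hc A' B']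
    exact map_zero _
  rw [hz, mul_zero]

end Aux5

section Aux6

lemma antiSup_one {p : ℕ} (f : Tens 1 p) : AntiSup f := by
  intro σ A B
  have hσ : σ = 1 := Equiv.ext fun x => by
    rw [Fin.eq_zero (σ x), Fin.eq_zero ((1 : Equiv.Perm (Fin 1)) x)]
  subst hσ
  simp

lemma P1_apply (k : ℕ) {p : ℕ} (f : Tens 1 (p+1)) (A : Fin 1 → Idx) (B : Fin (p+1) → Idx) :
    P1 k f A B = (((k : ℂ) - 1) / ((k : ℂ) + 2)) *
      symmetrize (fun B' => kdelta (A 0) (B' 0) * contr f ![] (Fin.tail B')) B := rfl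

lemma P2_apply (k : ℕ) {p : ℕ} (f : Tens 2 (p+1)) (A : Fin 2 → Idx) (B : Fin (p+1) → Idx) :
    P2 k f A B = (2 * ((k : ℂ) - 2) / (k : ℂ)) *
      antisymmetrize (fun A' =>
        symmetrize (fun B' => kdelta (A' 0) (B' 0) * contr f ![A' 1] (Fin.tail B')) B) A := rfl

lemma sum_sum_smul {q t : ℕ} (c : ℂ) (X W : (Fin q → Idx) → (Fin t → Idx) → ℂ) :
    ∑ A : Fin q → Idx, ∑ B : Fin t → Idx, (c * X A B) * W A B
      = c * ∑ A : Fin q → Idx, ∑ B : Fin t → Idx, X A B * W A B := by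
  rw [Finset.mul_sum]
  refine Finset.sum_congr rfl fun A _ => ?_
  rw [Finset.mul_sum]
  refine Finset.sum_congr rfl fun B _ => ?_
  ring

lemma contr_sub {q p : ℕ} (f g : Tens (q+1) (p+1)) (A : Fin q → Idx) (B : Fin p → Idx) :
    contr (f - g) A B = contr f A B - contr g A B := by
  unfold contr
  rw [← Finset.sum_sub_distrib]
  refine Finset.sum_congr rfl fun C _ => ?_
  simp

end Aux6

/-- For `k = m + 4 ≥ 4` and `l = 1, 2`, the map `𝒫_l` is the orthogonal
projection of `V_l` onto `𝒱_l^⊥`: it is idempotent, its kernel is `𝒱_l = ker 𝒞`, its range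
is orthogonal to `𝒱_l`, and `f − 𝒫_l f ∈ 𝒱_l` for every `f ∈ V_l`. -/
theorem P_orthogonal_projection (k m : ℕ) (hk : k = m + 4) :
    -- l = 1
    (∀ f : Tens 1 (m+3), IsMixed f →
      IsMixed (P1 k f) ∧
      (∀ A B, P1 k (P1 k f) A B = P1 k f A B) ∧
      ((∀ A B, P1 k f A B = 0) ↔ (∀ A B, contr f A B = 0)) ∧
      (∀ h : Tens 1 (m+3), IsMixed h → (∀ A B, contr h A B = 0) →
        tinner (P1 k f) h = 0) ∧
      (IsMixed (f - P1 k f) ∧ ∀ A B, contr (f - P1 k f) A B = 0)) ∧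
    -- l = 2
    (∀ f : Tens 2 (m+2), IsMixed f →
      IsMixed (P2 k f) ∧
      (∀ A B, P2 k (P2 k f) A B = P2 k f A B) ∧
      ((∀ A B, P2 k f A B = 0) ↔ (∀ A B, contr f A B = 0)) ∧
      (∀ h : Tens 2 (m+2), IsMixed h → (∀ A B, contr h A B = 0) →
        tinner (P2 k f) h = 0) ∧
      (IsMixed (f - P2 k f) ∧ ∀ A B, contr (f - P2 k f) A B = 0)) := by
  subst hk
  constructor
  · -- l = 1
    intro f hf
    have hmx : IsMixed (P1 (m+4) f) := by
      refine ⟨antiSup_one _, ?_⟩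
      intro A σ B
      rw [P1_apply, P1_apply, symmetrize_perm]
    refine ⟨hmx, ?_, ⟨?_, ?_⟩, ?_, ?_, ?_⟩
    · -- idempotent
      intro A B
      rw [P1_apply (m+4) (P1 (m+4) f) A B]
      have hfun : (fun B' : Fin (m+3) → Idx =>
          kdelta (A 0) (B' 0) * contr (P1 (m+4) f) ![] (Fin.tail B'))
          = (fun B' => kdelta (A 0) (B' 0) * contr f ![] (Fin.tail B')) := by
        funext B'
        rw [contr_P1 f hf]
      rw [hfun, ← P1_apply]
    · -- kernel, forward
      intro hP A B
      rw [← contr_P1 f hf A B]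
      exact Finset.sum_eq_zero fun C _ => hP _ _
    · -- kernel, backward
      intro hc A B
      rw [P1_apply]
      have hfun : (fun B' : Fin (m+3) → Idx =>
          kdelta (A 0) (B' 0) * contr f ![] (Fin.tail B')) = fun _ => 0 := by
        funext B'
        rw [hc ![] _, mul_zero]
      rw [hfun]
      simp [symmetrize]
    · -- orthogonality
      intro h hmix hch
      have step := adj_sym (fun A (B' : Fin (m+3) → Idx) =>
        kdelta (A 0) (B' 0) * contr f ![] (Fin.tail B')) h hmix.2
      calc tinner (P1 (m+4) f) h
          = ∑ A : Fin 1 → Idx, ∑ B : Fin (m+3) → Idx,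
              (((((m+4:ℕ) : ℂ) - 1) / (((m+4:ℕ) : ℂ) + 2)) *
                symmetrize (fun B' => kdelta (A 0) (B' 0) * contr f ![] (Fin.tail B')) B)
              * conj (h A B) := rfl
        _ = ((((m+4:ℕ) : ℂ) - 1) / (((m+4:ℕ) : ℂ) + 2)) *
              ∑ A : Fin 1 → Idx, ∑ B : Fin (m+3) → Idx,
                symmetrize (fun B' => kdelta (A 0) (B' 0) * contr f ![] (Fin.tail B')) B
                * conj (h A B) := sum_sum_smul _ _ _
        _ = ((((m+4:ℕ) : ℂ) - 1) / (((m+4:ℕ) : ℂ) + 2)) *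
              ∑ A : Fin 1 → Idx, ∑ B : Fin (m+3) → Idx,
                (kdelta (A 0) (B 0) * contr f ![] (Fin.tail B)) * conj (h A B) := by rw [step]
        _ = ((((m+4:ℕ) : ℂ) - 1) / (((m+4:ℕ) : ℂ) + 2)) * 0 := by
              rw [orth1 (contr f ![]) h hmix.2 hch]
        _ = 0 := mul_zero _
    · -- f - P1 f mixed
      exact ⟨antiSup_one _, by
        intro A σ B
        simp only [Pi.sub_apply]
        rw [hf.2 A σ B, hmx.2 A σ B]⟩
    · -- contr (f - P1 f) = 0
      intro A B
      rw [contr_sub f (P1 (m+4) f) A B, contr_P1 f hf, sub_self]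
  · -- l = 2
    intro f hf
    have hmx : IsMixed (P2 (m+4) f) := by
      constructor
      · intro σ A B
        rw [P2_apply, P2_apply, antisymmetrize_perm]
        ring
      · intro A σ B
        rw [P2_apply, P2_apply]
        have hfun : (fun A' : Fin 2 → Idx => symmetrize
            (fun B' => kdelta (A' 0) (B' 0) * contr f ![A' 1] (Fin.tail B')) (B ∘ σ))
            = (fun A' => symmetrize
            (fun B' => kdelta (A' 0) (B' 0) * contr f ![A' 1] (Fin.tail B')) B) := by
          funext A'
          rw [symmetrize_perm]
        rw [hfun]
    refine ⟨hmx, ?_, ⟨?_, ?_⟩, ?_, ?_, ?_⟩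
    · -- idempotent
      intro A B
      rw [P2_apply (m+4) (P2 (m+4) f) A B]
      have hfun : (fun A' : Fin 2 → Idx => symmetrize
          (fun B' => kdelta (A' 0) (B' 0) * contr (P2 (m+4) f) ![A' 1] (Fin.tail B')) B)
          = (fun A' => symmetrize
          (fun B' => kdelta (A' 0) (B' 0) * contr f ![A' 1] (Fin.tail B')) B) := by
        funext A'
        congr 1
        funext B'
        rw [contr_P2 f hf]
      rw [hfun, ← P2_apply]
    · -- kernel, forward
      intro hP A B
      rw [← contr_P2 f hf A B]
      exact Finset.sum_eq_zero fun C _ => hP _ _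
    · -- kernel, backward
      intro hc A B
      rw [P2_apply]
      have hfun : (fun A' : Fin 2 → Idx => symmetrize
          (fun B' => kdelta (A' 0) (B' 0) * contr f ![A' 1] (Fin.tail B')) B)
          = fun _ => 0 := by
        funext A'
        have h2 : (fun B' : Fin (m+2) → Idx =>
            kdelta (A' 0) (B' 0) * contr f ![A' 1] (Fin.tail B')) = fun _ => 0 := by
          funext B'
          rw [hc, mul_zero]
        rw [h2]
        simp [symmetrize]
      rw [hfun]
      simp [antisymmetrize]
    · -- orthogonality
      intro h hmix hch
      have stepA := adj_anti (fun A (B : Fin (m+2) → Idx) => symmetrize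
        (fun B' => kdelta (A 0) (B' 0) * contr f ![A 1] (Fin.tail B')) B) h hmix.1
      have stepS := adj_sym (fun A (B' : Fin (m+2) → Idx) =>
        kdelta (A 0) (B' 0) * contr f ![A 1] (Fin.tail B')) h hmix.2
      calc tinner (P2 (m+4) f) h
          = ∑ A : Fin 2 → Idx, ∑ B : Fin (m+2) → Idx,
              ((2 * (((m+4:ℕ) : ℂ) - 2) / ((m+4:ℕ) : ℂ)) *
                antisymmetrize (fun A' => symmetrize
                  (fun B' => kdelta (A' 0) (B' 0) * contr f ![A' 1] (Fin.tail B')) B) A)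
              * conj (h A B) := rfl
        _ = (2 * (((m+4:ℕ) : ℂ) - 2) / ((m+4:ℕ) : ℂ)) *
              ∑ A : Fin 2 → Idx, ∑ B : Fin (m+2) → Idx,
                antisymmetrize (fun A' => symmetrize
                  (fun B' => kdelta (A' 0) (B' 0) * contr f ![A' 1] (Fin.tail B')) B) A
                * conj (h A B) := sum_sum_smul _ _ _
        _ = (2 * (((m+4:ℕ) : ℂ) - 2) / ((m+4:ℕ) : ℂ)) *
              ∑ A : Fin 2 → Idx, ∑ B : Fin (m+2) → Idx,
                symmetrize (fun B' => kdelta (A 0) (B' 0) * contr f ![A 1] (Fin.tail B')) B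
                * conj (h A B) := by rw [stepA]
        _ = (2 * (((m+4:ℕ) : ℂ) - 2) / ((m+4:ℕ) : ℂ)) *
              ∑ A : Fin 2 → Idx, ∑ B : Fin (m+2) → Idx,
                (kdelta (A 0) (B 0) * contr f ![A 1] (Fin.tail B)) * conj (h A B) := by
              rw [stepS]
        _ = (2 * (((m+4:ℕ) : ℂ) - 2) / ((m+4:ℕ) : ℂ)) * 0 := by
              rw [orth2 (fun y => contr f ![y]) h hmix.2 hch]
        _ = 0 := mul_zero _
    · -- f - P2 f mixed
      constructor
      · intro σ A B
        simp only [Pi.sub_apply]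
        rw [hf.1 σ A B, hmx.1 σ A B]
        ring
      · intro A σ B
        simp only [Pi.sub_apply]
        rw [hf.2 A σ B, hmx.2 A σ B]
    · -- contr (f - P2 f) = 0
      intro A B
      rw [contr_sub f (P2 (m+4) f) A B, contr_P2 f hf, sub_self]

end
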